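/- Let (X,d) be a compact metric space and T : X → X a continuous map, and let g be any mistake function. Then the topological entropy of T satisfies h_top(T) = lim_{ε→0} limsup_{n→∞} (1/n) log s_n(g;X,ε), where s_n(g;X,ε) is the maximal cardinality of a (g;n,ε)-separated subset of X. -/

import Mathlib

open Filter Set

/-- A *mistake function* (with threshold `ε₀`): `g n ε` is nondecreasing in `n`,
`g n ε / n → 0`, and `g n ε = g n ε₀` for `ε ≥ ε₀`. -/
def IsMistakeFunction (ε₀ : ℝ) (g : ℕ → ℝ → ℕ) : Prop :=
  0 < ε₀ ∧
  (∀ ε : ℝ, 0 < ε → ε < ε₀ → ∀ n : ℕ, g n ε ≤ g (n + 1) ε) ∧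
  (∀ ε : ℝ, 0 < ε → ε < ε₀ →
    Filter.Tendsto (fun n : ℕ => (g n ε : ℝ) / n) Filter.atTop (nhds 0)) ∧
  (∀ ε : ℝ, ε₀ ≤ ε → ∀ n : ℕ, g n ε = g n ε₀)

/-- The `(g; n, ε)` Bowen ball `B_n(g; x, ε)`: points `y` that `ε`-trace the orbit of `x`
along some `Λ ⊆ {0, …, n-1}` with `#Λ ≥ n - g(n,ε)`. -/
def mistakeBall {X : Type*} [MetricSpace X] (T : X → X) (g : ℕ → ℝ → ℕ)
    (n : ℕ) (x : X) (ε : ℝ) : Set X :=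
  {y | ∃ Λ : Finset ℕ, Λ ⊆ Finset.range n ∧ n - g n ε ≤ Λ.card ∧
    ∀ j ∈ Λ, dist (T^[j] x) (T^[j] y) < ε}

/-- `T` has the almost specification property with mistake function `g` and constants `kg`. -/
def AlmostSpecWith {X : Type*} [MetricSpace X] (T : X → X) (g : ℕ → ℝ → ℕ)
    (kg : ℝ → ℕ) : Prop :=
  ∀ m : ℕ, ∀ eps : Fin m → ℝ, (∀ j, 0 < eps j) →
    ∀ xs : Fin m → X, ∀ ns : Fin m → ℕ, (∀ j, kg (eps j) ≤ ns j) →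
      ∃ z : X, ∀ j : Fin m,
        T^[∑ s ∈ Finset.Iio j, ns s] z ∈ mistakeBall T g (ns j) (xs j) (eps j)

/-- `T` has the almost specification property (for some mistake function). -/
def HasAlmostSpec {X : Type*} [MetricSpace X] (T : X → X) : Prop :=
  ∃ (ε₀ : ℝ) (g : ℕ → ℝ → ℕ), IsMistakeFunction ε₀ g ∧
    ∃ kg : ℝ → ℕ, AlmostSpecWith T g kg

/-- `s_n(X, ε)`: the maximal cardinality of an `(n, ε)`-separated subset of `X`. -/
noncomputable def sepNum {X : Type*} [MetricSpace X] (T : X → X) (n : ℕ) (ε : ℝ) : ℕ :=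
  sSup {k : ℕ | ∃ F : Finset X,
    (∀ x ∈ F, ∀ y ∈ F, x ≠ y → ∃ j < n, ε < dist (T^[j] x) (T^[j] y)) ∧ F.card = k}

/-- `s_n(g; X, ε)`: the maximal cardinality of a `(g; n, ε)`-separated subset of `X`. -/
noncomputable def sepNumG {X : Type*} [MetricSpace X] (T : X → X) (g : ℕ → ℝ → ℕ)
    (n : ℕ) (ε : ℝ) : ℕ :=
  sSup {k : ℕ | ∃ F : Finset X,
    (∀ x ∈ F, ∀ y ∈ F, x ≠ y →
      g n ε < Set.ncard {j : ℕ | j < n ∧ ε < dist (T^[j] x) (T^[j] y)}) ∧ F.card = k}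

/-- Topological entropy `h_top(T) = lim_{ε→0} limsup_n (1/n) log s_n(X,ε)`; since the
inner quantity is nonincreasing in `ε`, the limit as `ε → 0⁺` is the supremum over `ε > 0`. -/
noncomputable def topEntropy {X : Type*} [MetricSpace X] (T : X → X) : EReal :=
  ⨆ ε : {e : ℝ // 0 < e}, Filter.atTop.limsup
    (fun n : ℕ => ((Real.log (sepNum T n ε.1) / n : ℝ) : EReal))

/-!
Mistake-separated points are Bowen-separated, so `s_n(g; X, ε) ≤ s_n(X, ε)`. Conversely, let
`2δ ≤ ε` and let `E` be a maximal `(n, ε)`-separated set. A maximal `(g; n, δ)`-separated subset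
`F ⊆ E` leaves every point of `E` within `δ` of some point of `F` at all but `g(n, δ)` times.
For fixed `x`, record for such a `y` the times it is far from `x` together with the point of a
`δ`-net `S` nearest to `T^j y` at those times; this code is injective on `E`, and weighting a
far time by `a ∈ (0, 1]` bounds the number of such `y` by `(1 + #S a)^n / a^{g(n, δ)}`. Since
`g(n, δ)/n → 0` and `log (1 + #S a) → 0` as `a → 0`, this factor grows subexponentially.
-/

open scoped Finset

section PairwiseCard

variable {α : Type*} {r s : α → α → Prop} {m : ℕ}

/-- Junk value `0` when the pairwise `r`-related finite sets have unbounded cardinality. -/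
noncomputable def maxPairwiseCard (r : α → α → Prop) : ℕ :=
  sSup {k | ∃ F : Finset α, (F : Set α).Pairwise r ∧ F.card = k}

lemma bddAbove_pairwiseCards (hbdd : ∀ F : Finset α, (F : Set α).Pairwise r → F.card ≤ m) :
    BddAbove {k | ∃ F : Finset α, (F : Set α).Pairwise r ∧ F.card = k} :=
  ⟨m, by rintro _ ⟨F, hF, rfl⟩; exact hbdd F hF⟩

lemma card_le_maxPairwiseCard (hbdd : ∀ F : Finset α, (F : Set α).Pairwise r → F.card ≤ m)
    {F : Finset α} (hF : (F : Set α).Pairwise r) : F.card ≤ maxPairwiseCard r :=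
  le_csSup (bddAbove_pairwiseCards hbdd) ⟨F, hF, rfl⟩

lemma exists_pairwise_card_eq_maxPairwiseCard
    (hbdd : ∀ F : Finset α, (F : Set α).Pairwise r → F.card ≤ m) :
    ∃ F : Finset α, (F : Set α).Pairwise r ∧ F.card = maxPairwiseCard r :=
  Nat.sSup_mem (s := {k | ∃ F : Finset α, (F : Set α).Pairwise r ∧ F.card = k})
    ⟨0, ∅, by simp⟩ (bddAbove_pairwiseCards hbdd)

lemma maxPairwiseCard_mono (hrs : r ≤ s)
    (hbdd : ∀ F : Finset α, (F : Set α).Pairwise s → F.card ≤ m) :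
    maxPairwiseCard r ≤ maxPairwiseCard s := by
  obtain ⟨F, hF, hcard⟩ :=
    exists_pairwise_card_eq_maxPairwiseCard fun F hF => hbdd F (hF.mono' hrs)
  exact hcard ▸ card_le_maxPairwiseCard hbdd (hF.mono' hrs)

open Classical in
/-- Greedy bound: a maximal pairwise `r`-related subset `F ⊆ E` leaves no point of `E` outside
the `¬ r`-neighbourhoods of the points of `F`. -/
lemma card_le_maxPairwiseCard_mul (hsymm : ∀ x y, r x y → r y x) (hirr : ∀ x, ¬ r x x)
    (hbdd : ∀ F : Finset α, (F : Set α).Pairwise r → F.card ≤ m) (E : Finset α) {M : ℝ}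
    (hM₀ : 0 ≤ M) (hM : ∀ x ∈ E, ((E.filter fun y => ¬ r x y).card : ℝ) ≤ M) :
    (E.card : ℝ) ≤ maxPairwiseCard r * M := by
  obtain ⟨F, hFmem, hFmax⟩ :=
    (E.powerset.filter fun F : Finset α => (F : Set α).Pairwise r).exists_max_image
      Finset.card ⟨∅, by simp⟩
  simp only [Finset.mem_filter, Finset.mem_powerset] at hFmem hFmax
  have hcover : E ⊆ F.biUnion fun x => E.filter fun y => ¬ r x y := by
    intro y hy
    simp only [Finset.mem_biUnion, Finset.mem_filter]
    by_contra! hfar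
    have hyF : y ∉ F := fun hyF => hirr y (hfar y hyF hy)
    have hins : ((insert y F : Finset α) : Set α).Pairwise r := by
      rw [Finset.coe_insert, Set.pairwise_insert]
      exact ⟨hFmem.2, fun x hx _ => ⟨hsymm _ _ (hfar x hx hy), hfar x hx hy⟩⟩
    have := hFmax _ ⟨Finset.insert_subset hy hFmem.1, hins⟩
    rw [Finset.card_insert_of_notMem hyF] at this
    omega
  calc (E.card : ℝ) ≤ ∑ x ∈ F, ((E.filter fun y => ¬ r x y).card : ℝ) := by
        exact_mod_cast (Finset.card_le_card hcover).trans Finset.card_biUnion_le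
    _ ≤ F.card * M := by
        simpa using Finset.sum_le_sum fun x hx => hM x (hFmem.1 hx)
    _ ≤ maxPairwiseCard r * M := by
        gcongr
        exact card_le_maxPairwiseCard hbdd hFmem.2

end PairwiseCard

section Separation

variable {X : Type*} [MetricSpace X] (T : X → X)

def BowenSeparated (n : ℕ) (ε : ℝ) (x y : X) : Prop :=
  ∃ j < n, ε < dist (T^[j] x) (T^[j] y)

def MistakeSeparated (g : ℕ → ℝ → ℕ) (n : ℕ) (ε : ℝ) (x y : X) : Prop :=
  g n ε < {j : ℕ | j < n ∧ ε < dist (T^[j] x) (T^[j] y)}.ncard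

noncomputable def farTimes (n : ℕ) (ε : ℝ) (x y : X) : Finset ℕ :=
  {j ∈ Finset.range n | ε < dist (T^[j] x) (T^[j] y)}

variable {T} {g : ℕ → ℝ → ℕ} {n : ℕ} {ε : ℝ} {x y : X}

lemma sepNum_eq_maxPairwiseCard :
    sepNum T n ε = maxPairwiseCard (BowenSeparated T n ε) := rfl

lemma sepNumG_eq_maxPairwiseCard :
    sepNumG T g n ε = maxPairwiseCard (MistakeSeparated T g n ε) := rfl

lemma MistakeSeparated.bowenSeparated (h : MistakeSeparated T g n ε x y) : BowenSeparated T n ε x y :=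
  (Set.nonempty_of_ncard_ne_zero (Nat.ne_zero_of_lt h)).imp fun _ => id

lemma MistakeSeparated.symm (h : MistakeSeparated T g n ε x y) : MistakeSeparated T g n ε y x := by
  simpa only [MistakeSeparated, dist_comm] using h

lemma not_mistakeSeparated_self (hε : 0 ≤ ε) (x : X) :
    ¬ MistakeSeparated T g n ε x x := by
  simp [MistakeSeparated, not_lt.2 hε]

lemma mistakeSeparated_iff :
    MistakeSeparated T g n ε x y ↔ g n ε < #(farTimes T n ε x y) := by
  rw [MistakeSeparated, farTimes, ← Set.ncard_coe_finset]
  simp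

open Classical in
/-- Rankin's trick: `y ∈ E` is determined by the net points nearest to `T^[j] y` at the times `j`
it is far from `x`, and the total weight of all such codes is `(1 + #S * a) ^ n`. -/
lemma sum_pow_card_farTimes_le {δ : ℝ} (hδε : 2 * δ ≤ ε) {S : Finset X}
    (hS : ∀ x, ∃ s ∈ S, dist x s < δ) {E : Finset X}
    (hE : (E : Set X).Pairwise (BowenSeparated T n ε)) (x : X) {a : ℝ} (ha : 0 ≤ a) :
    ∑ y ∈ E, a ^ #(farTimes T n δ x y) ≤ (1 + S.card * a) ^ n := by
  choose c hcS hc using hS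
  let code (y : X) (j : Fin n) : Option S :=
    if δ < dist (T^[j] x) (T^[j] y) then some ⟨c (T^[j] y), hcS _⟩ else none
  let w (o : Option S) : ℝ := o.elim 1 fun _ => a
  have hweight (y : X) : a ^ #(farTimes T n δ x y) = ∏ j, w (code y j) := by
    rw [farTimes, ← Finset.prod_const, Finset.prod_filter, ← Fin.prod_univ_eq_prod_range]
    exact Finset.prod_congr rfl fun j _ => by simp only [w, code]; split_ifs <;> rfl
  have hinj : Set.InjOn code E := by
    intro y hy z hz hyz
    by_contra hne
    obtain ⟨j, hj, hsep⟩ := hE hy hz hne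
    have hcode := congrFun hyz ⟨j, hj⟩
    simp only [code] at hcode
    have hclose : dist (T^[j] y) (T^[j] z) ≤ 2 * δ := by
      split_ifs at hcode with hy' hz' hz'
      · have hceq : c (T^[j] y) = c (T^[j] z) :=
          congrArg Subtype.val (Option.some_injective _ hcode)
        linarith [dist_triangle_right (T^[j] y) (T^[j] z) (c (T^[j] z)), hc (T^[j] z),
          hceq ▸ hc (T^[j] y)]
      · rw [not_lt, dist_comm] at hy' hz'
        linarith [dist_triangle_right (T^[j] y) (T^[j] z) (T^[j] x)]
    linarith
  calc ∑ y ∈ E, a ^ #(farTimes T n δ x y)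
      = ∑ f ∈ E.image code, ∏ j, w (f j) := by
        rw [Finset.sum_image hinj]
        exact Finset.sum_congr rfl fun y _ => hweight y
    _ ≤ ∑ f : Fin n → Option S, ∏ j, w (f j) :=
        Finset.sum_le_sum_of_subset_of_nonneg (Finset.subset_univ _) fun f _ _ =>
          Finset.prod_nonneg fun j _ => by cases f j <;> simp [w, ha]
    _ = (1 + S.card * a) ^ n := by
        rw [← Fintype.sum_pow]
        simp [w, Fintype.sum_option]

end Separation

lemma Real.log_natCast_le_log_natCast {m k : ℕ} (h : m ≤ k) : Real.log m ≤ Real.log k := by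
  rcases m.eq_zero_or_pos with rfl | hm
  · simpa using Real.log_natCast_nonneg k
  · exact Real.log_le_log (by exact_mod_cast hm) (by exact_mod_cast h)

lemma limsup_coe_le_of_forall_eventually_le_add {ι : Type*} {f : Filter ι} {u v : ι → ℝ}
    (h : ∀ c > 0, ∀ᶠ i in f, u i ≤ v i + c) :
    limsup (fun i => (u i : EReal)) f ≤ limsup (fun i => (v i : EReal)) f := by
  refine EReal.le_of_forall_lt_iff_le.1 fun z hz => ?_
  obtain ⟨z', hvz', hz'z⟩ := EReal.lt_iff_exists_real_btwn.1 hz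
  rw [EReal.coe_lt_coe_iff] at hz'z
  refine limsup_le_of_le (by isBoundedDefault) ?_
  filter_upwards [eventually_lt_of_limsup_lt hvz', h (z - z') (sub_pos.2 hz'z)] with i hvi hui
  rw [EReal.coe_lt_coe_iff] at hvi
  exact EReal.coe_le_coe_iff.2 (by linarith)

lemma exists_finset_forall_dist_lt {X : Type*} [PseudoMetricSpace X] [CompactSpace X] {δ : ℝ}
    (hδ : 0 < δ) : ∃ S : Finset X, ∀ x, ∃ s ∈ S, dist x s < δ := by
  obtain ⟨t, -, ht, hcover⟩ := finite_cover_balls_of_compact (isCompact_univ (X := X)) hδ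
  refine ⟨ht.toFinset, fun x => ?_⟩
  simpa using hcover (mem_univ x)

section Entropy

variable {X : Type*} [MetricSpace X] {T : X → X} {n : ℕ} {δ ε a : ℝ}
  {S : Finset X}

lemma card_le_of_pairwise_bowenSeparated (hδε : 2 * δ ≤ ε) (hS : ∀ x, ∃ s ∈ S, dist x s < δ)
    {E : Finset X} (hE : (E : Set X).Pairwise (BowenSeparated T n ε)) :
    E.card ≤ (1 + S.card) ^ n := by
  rcases E.eq_empty_or_nonempty with rfl | ⟨x, -⟩
  · simp
  · have := sum_pow_card_farTimes_le hδε hS hE x zero_le_one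
    simp only [one_pow, Finset.sum_const, nsmul_eq_mul, mul_one] at this
    exact_mod_cast this

lemma exists_bound_card_bowenSeparated [CompactSpace X] (T : X → X) (n : ℕ) (hε : 0 < ε) :
    ∃ m, ∀ F : Finset X, (F : Set X).Pairwise (BowenSeparated T n ε) → F.card ≤ m := by
  obtain ⟨S, hS⟩ := exists_finset_forall_dist_lt (X := X) (half_pos hε)
  exact ⟨_, fun F hF => card_le_of_pairwise_bowenSeparated (by linarith) hS hF⟩

lemma sepNumG_le_sepNum [CompactSpace X] (g : ℕ → ℝ → ℕ) (n : ℕ) (hε : 0 < ε) :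
    sepNumG T g n ε ≤ sepNum T n ε := by
  obtain ⟨m, hm⟩ := exists_bound_card_bowenSeparated T n hε
  exact maxPairwiseCard_mono (fun _ _ => MistakeSeparated.bowenSeparated) hm

open Classical in
lemma card_filter_not_mistakeSeparated_mul_pow_le (g : ℕ → ℝ → ℕ) (hδε : 2 * δ ≤ ε)
    (hS : ∀ x, ∃ s ∈ S, dist x s < δ) {E : Finset X}
    (hE : (E : Set X).Pairwise (BowenSeparated T n ε)) (x : X) (ha₀ : 0 < a) (ha₁ : a ≤ 1) :
    #{y ∈ E | ¬ MistakeSeparated T g n δ x y} * a ^ g n δ ≤ (1 + S.card * a) ^ n :=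
  calc #{y ∈ E | ¬ MistakeSeparated T g n δ x y} * a ^ g n δ
      = ∑ y ∈ E with ¬ MistakeSeparated T g n δ x y, a ^ g n δ := by
        rw [Finset.sum_const, nsmul_eq_mul]
    _ ≤ ∑ y ∈ E with ¬ MistakeSeparated T g n δ x y,
          a ^ #(farTimes T n δ x y) := by
        refine Finset.sum_le_sum fun y hy => pow_le_pow_of_le_one ha₀.le ha₁ ?_
        simpa [mistakeSeparated_iff] using (Finset.mem_filter.1 hy).2
    _ ≤ ∑ y ∈ E, a ^ #(farTimes T n δ x y) :=
        Finset.sum_le_sum_of_subset_of_nonneg (Finset.filter_subset _ _) fun _ _ _ => by positivity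
    _ ≤ (1 + S.card * a) ^ n := sum_pow_card_farTimes_le hδε hS hE x ha₀.le

lemma sepNum_le_sepNumG_mul [CompactSpace X] (g : ℕ → ℝ → ℕ) (n : ℕ) (hδ : 0 < δ)
    (hδε : 2 * δ ≤ ε) (hS : ∀ x, ∃ s ∈ S, dist x s < δ) (ha₀ : 0 < a) (ha₁ : a ≤ 1) :
    (sepNum T n ε : ℝ) ≤ sepNumG T g n δ * ((1 + S.card * a) ^ n / a ^ g n δ) := by
  obtain ⟨E, hE, hcard⟩ := exists_pairwise_card_eq_maxPairwiseCard (r := BowenSeparated T n ε)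
    fun F hF => card_le_of_pairwise_bowenSeparated hδε hS hF
  obtain ⟨m, hm⟩ := exists_bound_card_bowenSeparated T n hδ
  rw [sepNum_eq_maxPairwiseCard, ← hcard, sepNumG_eq_maxPairwiseCard]
  have hbdd (F : Finset X) (hF : (F : Set X).Pairwise (MistakeSeparated T g n δ)) : F.card ≤ m :=
    hm F (hF.mono' fun _ _ h => h.bowenSeparated)
  have hM : 0 ≤ (1 + S.card * a) ^ n / a ^ g n δ := by positivity
  refine card_le_maxPairwiseCard_mul (r := MistakeSeparated T g n δ)
    (fun _ _ => MistakeSeparated.symm) (not_mistakeSeparated_self hδ.le) hbdd E hM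
    fun x _ => ?_
  rw [le_div_iff₀ (by positivity)]
  exact card_filter_not_mistakeSeparated_mul_pow_le g hδε hS hE x ha₀ ha₁

lemma log_sepNum_le [CompactSpace X] (g : ℕ → ℝ → ℕ) (n : ℕ) (hδ : 0 < δ)
    (hδε : 2 * δ ≤ ε) (hS : ∀ x, ∃ s ∈ S, dist x s < δ) (ha₀ : 0 < a) (ha₁ : a ≤ 1) :
    Real.log (sepNum T n ε) ≤
      Real.log (sepNumG T g n δ) + n * Real.log (1 + S.card * a) + g n δ * Real.log a⁻¹ := by
  have hle := sepNum_le_sepNumG_mul (T := T) g n hδ hδε hS ha₀ ha₁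
  rcases (sepNum T n ε).eq_zero_or_pos with h0 | hpos
  · have hL : 0 ≤ Real.log (1 + S.card * a) := Real.log_nonneg (by simp; positivity)
    have hK : 0 ≤ Real.log a⁻¹ := Real.log_nonneg (one_le_inv_iff₀.2 ⟨ha₀, ha₁⟩)
    rw [h0, Nat.cast_zero, Real.log_zero]
    positivity
  have hpos' : (0 : ℝ) < sepNum T n ε := by exact_mod_cast hpos
  have hG : (0 : ℝ) < sepNumG T g n δ := pos_of_mul_pos_left (hpos'.trans_le hle) (by positivity)
  calc Real.log (sepNum T n ε)
      ≤ Real.log (sepNumG T g n δ * ((1 + S.card * a) ^ n / a ^ g n δ)) :=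
        Real.log_le_log hpos' hle
    _ = _ := by
        rw [Real.log_mul hG.ne' (by positivity), Real.log_div (by positivity) (by positivity),
          Real.log_pow, Real.log_pow, Real.log_inv]
        ring

end Entropy

lemma eventually_log_sepNum_div_le {X : Type*} [MetricSpace X] [CompactSpace X] {T : X → X}
    (g : ℕ → ℝ → ℕ) {δ ε : ℝ} (hδ : 0 < δ) (hδε : 2 * δ ≤ ε)
    (hg : Tendsto (fun n : ℕ => (g n δ : ℝ) / n) atTop (nhds 0)) {c : ℝ} (hc : 0 < c) :
    ∀ᶠ n : ℕ in atTop,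
      Real.log (sepNum T n ε) / n ≤ Real.log (sepNumG T g n δ) / n + c := by
  obtain ⟨S, hS⟩ := exists_finset_forall_dist_lt (X := X) hδ
  set a := min 1 (c / (2 * (S.card + 1)))
  have ha₀ : 0 < a := by positivity
  have ha₁ : a ≤ 1 := min_le_left _ _
  have hgrowth : Real.log (1 + S.card * a) ≤ c / 2 := by
    have hSa : S.card * a ≤ c / 2 := by
      calc S.card * a ≤ (S.card + 1) * (c / (2 * (S.card + 1))) := by
            gcongr
            · linarith
            · exact min_le_right _ _
        _ = c / 2 := by field_simp
    linarith [Real.log_le_sub_one_of_pos (by positivity : 0 < 1 + S.card * a)]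
  have hcost : ∀ᶠ n : ℕ in atTop, (g n δ : ℝ) / n * Real.log a⁻¹ < c / 2 :=
    (hg.mul_const _).eventually (gt_mem_nhds (by simpa using half_pos hc))
  filter_upwards [hcost, eventually_gt_atTop 0] with n hn hn₀
  have hn₀' : (0 : ℝ) < n := by exact_mod_cast hn₀
  have := div_le_div_of_nonneg_right (log_sepNum_le (T := T) g n hδ hδε hS ha₀ ha₁) hn₀'.le
  rw [add_div, add_div, mul_div_cancel_left₀ _ hn₀'.ne', mul_div_right_comm] at this
  linarith

theorem topEntropy_eq_mistake_entropy_general {X : Type*} [MetricSpace X] [CompactSpace X]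
    (T : X → X) (ε₀ : ℝ) (g : ℕ → ℝ → ℕ)
    (hg : IsMistakeFunction ε₀ g) :
    topEntropy T = ⨆ ε : {e : ℝ // 0 < e}, Filter.atTop.limsup
      (fun n : ℕ => ((Real.log (sepNumG T g n ε.1) / n : ℝ) : EReal)) := by
  refine le_antisymm (iSup_le fun ⟨ε, hε⟩ => ?_) (iSup_mono fun ⟨ε, hε⟩ => ?_)
  · obtain ⟨hε₀, -, hg_sublinear, -⟩ := hg
    set δ := min ε ε₀ / 2 with hδ_def
    have hδ : 0 < δ := by positivity
    have hδε : 2 * δ ≤ ε := by linarith [min_le_left ε ε₀]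
    have hδε₀ : δ < ε₀ := by linarith [min_le_right ε ε₀]
    exact le_iSup_of_le ⟨δ, hδ⟩ (limsup_coe_le_of_forall_eventually_le_add fun c hc =>
      eventually_log_sepNum_div_le g hδ hδε (hg_sublinear δ hδ hδε₀) hc)
  · exact limsup_le_limsup (Eventually.of_forall fun n => EReal.coe_le_coe_iff.2 <|
      div_le_div_of_nonneg_right (Real.log_natCast_le_log_natCast (sepNumG_le_sepNum g n hε))
        n.cast_nonneg)

/-- for any mistake function `g`, the topological entropy equals
`lim_{ε→0} limsup_n (1/n) log s_n(g; X, ε)` (the limit as `ε → 0⁺` being the supremum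
over `ε > 0`, by monotonicity). -/
theorem topEntropy_eq_mistake_entropy {X : Type*} [MetricSpace X] [CompactSpace X]
    (T : X → X) (hT : Continuous T) (ε₀ : ℝ) (g : ℕ → ℝ → ℕ)
    (hg : IsMistakeFunction ε₀ g) :
    topEntropy T = ⨆ ε : {e : ℝ // 0 < e}, Filter.atTop.limsup
      (fun n : ℕ => ((Real.log (sepNumG T g n ε.1) / n : ℝ) : EReal)) :=
  topEntropy_eq_mistake_entropy_general T ε₀ g hg
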